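/- For all positive integers n and m, ∑_{k=1}^n (-1)^{k+1} C(n,k)/k^m = ∑_{n ≥ k_1 ≥ k_2 ≥ ⋯ ≥ k_m ≥ 1} 1/(k_1 k_2 ⋯ k_m). -/

import Mathlib

/-!
Induction on `m`. The case `m = 0` is the alternating sum of binomial coefficients. For the step,
the identity `∑_{j=k}^n C(j,k)/j = C(n,k)/k` (a hockey-stick sum, divided by `j`) rewrites
`C(n,k)/k^(m+1)` as `∑_{j=k}^n (C(j,k)/k^m) / j`; exchanging the two sums and applying the
induction hypothesis at each `j` yields `∑_{j=1}^n (1/j) · nestedHarmonic j m`.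
-/

/-- The nested sum `∑_{n ≥ k₁ ≥ ⋯ ≥ k_m ≥ 1} ∏_j 1/k_j`. -/
noncomputable def nestedHarmonic : ℕ → ℕ → ℝ
  | _, 0 => 1
  | n, m + 1 => ∑ k ∈ Finset.Icc 1 n, (1 / (k : ℝ)) * nestedHarmonic k m

open Finset

theorem sum_Icc_one_neg_one_pow_succ_mul_choose {R : Type*} [CommRing R] {n : ℕ} (hn : n ≠ 0) :
    ∑ k ∈ Icc 1 n, (-1 : R) ^ (k + 1) * n.choose k = 1 := by
  have h := congrArg (Int.cast : ℤ → R) (Int.alternating_sum_range_choose_of_ne hn)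
  rw [range_eq_Ico, sum_eq_sum_Ico_succ_bot (Nat.succ_pos n)] at h
  push_cast [Nat.succ_eq_add_one, zero_add, Ico_add_one_right_eq_Icc, Nat.choose_zero_right] at h
  calc ∑ k ∈ Icc 1 n, (-1 : R) ^ (k + 1) * n.choose k
      = -∑ k ∈ Icc 1 n, (-1 : R) ^ k * n.choose k := by
        rw [← sum_neg_distrib]
        exact sum_congr rfl fun k _ => by ring
    _ = 1 := by linear_combination -h

theorem sum_Icc_choose_succ_div {K : Type*} [Field K] [CharZero K] (k n : ℕ) :
    ∑ j ∈ Icc (k + 1) n, (j.choose (k + 1) : K) / j = n.choose (k + 1) / (k + 1) := by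
  induction n with
  | zero => simp
  | succ n ih =>
    rcases Nat.lt_or_ge n k with hnk | hkn
    · rw [Icc_eq_empty (by omega), Nat.choose_eq_zero_of_lt (by omega)]
      simp
    rw [sum_Icc_succ_top (by omega), ih]
    have hcancel : ((n + 1).choose (k + 1) : K) / (n + 1 : ℕ) = n.choose k / (k + 1) := by
      rw [div_eq_div_iff (Nat.cast_ne_zero.mpr n.succ_ne_zero) (Nat.cast_add_one_ne_zero k)]
      exact_mod_cast (Nat.add_one_mul_choose_eq n k).symm.trans (mul_comm _ _)
    rw [hcancel, ← add_div, Nat.choose_succ_succ', Nat.cast_add, add_comm]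

theorem sum_Icc_choose_div {K : Type*} [Field K] [CharZero K] {k : ℕ} (hk : k ≠ 0) (n : ℕ) :
    ∑ j ∈ Icc k n, (j.choose k : K) / j = n.choose k / k := by
  obtain ⟨k, rfl⟩ := Nat.exists_eq_succ_of_ne_zero hk
  simpa using sum_Icc_choose_succ_div k n

theorem sum_Icc_sum_Icc_comm {M : Type*} [AddCommMonoid M] (a n : ℕ) (f : ℕ → ℕ → M) :
    ∑ j ∈ Icc a n, ∑ k ∈ Icc a j, f j k = ∑ k ∈ Icc a n, ∑ j ∈ Icc k n, f j k :=
  sum_comm' fun _ _ => by simp only [mem_Icc]; omega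

theorem alternating_binomial_sum_eq_nestedHarmonic (m : ℕ) {n : ℕ} (hn : n ≠ 0) :
    ∑ k ∈ Icc 1 n, (-1 : ℝ) ^ (k + 1) * n.choose k / (k : ℝ) ^ m = nestedHarmonic n m := by
  induction m generalizing n with
  | zero => simpa [nestedHarmonic] using sum_Icc_one_neg_one_pow_succ_mul_choose hn
  | succ m ih =>
    calc ∑ k ∈ Icc 1 n, (-1 : ℝ) ^ (k + 1) * n.choose k / (k : ℝ) ^ (m + 1)
        = ∑ k ∈ Icc 1 n, (-1 : ℝ) ^ (k + 1) / (k : ℝ) ^ m * ∑ j ∈ Icc k n, (j.choose k : ℝ) / j :=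
          sum_congr rfl fun k hk => by
            rw [sum_Icc_choose_div (by simp at hk; omega), pow_succ]; ring
      _ = ∑ j ∈ Icc 1 n, 1 / (j : ℝ) *
            ∑ k ∈ Icc 1 j, (-1 : ℝ) ^ (k + 1) * j.choose k / (k : ℝ) ^ m := by
          simp only [mul_sum, sum_Icc_sum_Icc_comm]
          refine sum_congr rfl fun k _ => sum_congr rfl fun j _ => by ring
      _ = nestedHarmonic n (m + 1) := by
          rw [nestedHarmonic]
          exact sum_congr rfl fun j hj => by rw [ih (by simp at hj; omega)]

theorem dilcher_limit_general (n m : ℕ) (hn : 0 < n) :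
    ∑ k ∈ Finset.Icc 1 n, (-1 : ℝ) ^ (k + 1) * (n.choose k : ℝ) / (k : ℝ) ^ m
    = nestedHarmonic n m :=
  alternating_binomial_sum_eq_nestedHarmonic m hn.ne'

theorem dilcher_limit (n m : ℕ) (hn : 0 < n) (hm : 0 < m) :
    ∑ k ∈ Finset.Icc 1 n, (-1 : ℝ) ^ (k + 1) * (n.choose k : ℝ) / (k : ℝ) ^ m
    = nestedHarmonic n m :=
  dilcher_limit_general n m hn
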